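/- Let f_w be an l-layer GCN with nonzero weight matrices W_1,…,W_l, but with an arbitrary matrix P ∈ ℝ^{n×n} in place of the graph Laplacian, and input X ∈ ℝ^{n×h_0}. Let ΔW_1,…,ΔW_l be perturbation matrices of matching sizes with ‖ΔW_i‖₂ ≤ ‖W_i‖₂ / l for all i ∈ [l], and let H_k' denote the node representations of the perturbed network with weights W_i + ΔW_i. Then for every 1 ≤ j ≤ l−1: ‖H_j' − H_j‖_F ≤ ‖X‖_F · ‖P‖₂^j · (∏_{i=1}^j ‖W_i‖₂) · Σ_{k=1}^j (‖ΔW_k‖₂ / ‖W_k‖₂) · (1 + 1/l)^{j−k}. -/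

import Mathlib

open MeasureTheory Matrix Finset

noncomputable section

/-- Spectral norm of a real matrix: the operator norm induced by Euclidean vector norms. -/
def specNorm {m n : Type*} [Fintype m] [Fintype n] [DecidableEq n] (A : Matrix m n ℝ) : ℝ :=
  ‖LinearMap.toContinuousLinearMap (Matrix.toEuclideanLin A)‖

/-- Frobenius norm of a real matrix. -/
def frobNorm {m n : Type*} [Fintype m] [Fintype n] (A : Matrix m n ℝ) : ℝ :=
  Real.sqrt (∑ i, ∑ j, (A i j) ^ 2)

/-- Euclidean norm of a finite real vector. -/
def euclNorm {n : Type*} [Fintype n] (v : n → ℝ) : ℝ :=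
  Real.sqrt (∑ i, (v i) ^ 2)

/-- Entrywise ReLU on a matrix. -/
def relu {m k : Type*} (M : Matrix m k ℝ) : Matrix m k ℝ := M.map (fun x => max x 0)

/-- Node representations of a GCN: `H_0 = X`, `H_{k+1} = σ(P H_k W_{k+1})`
(we index weights from `0`, so `W k` is the paper's `W_{k+1}`). -/
def gcnRep {n : ℕ} (d : ℕ → ℕ) (W : ∀ k : ℕ, Matrix (Fin (d k)) (Fin (d (k + 1))) ℝ)
    (P : Matrix (Fin n) (Fin n) ℝ) (X : Matrix (Fin n) (Fin (d 0)) ℝ) :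
    (k : ℕ) → Matrix (Fin n) (Fin (d k)) ℝ
  | 0 => X
  | (k + 1) => relu (P * gcnRep d W P X k * W k)

/-- Output (readout) of an `l`-layer GCN: `f_w(G) = H_l = (1/n) 1_n H_{l-1} W_l`. -/
def gcnOut {n : ℕ} (d : ℕ → ℕ) (W : ∀ k : ℕ, Matrix (Fin (d k)) (Fin (d (k + 1))) ℝ)
    (P : Matrix (Fin n) (Fin n) ℝ) (X : Matrix (Fin n) (Fin (d 0)) ℝ) :
    (l : ℕ) → Fin (d l) → ℝ
  | 0 => fun _ => 0
  | (l + 1) => fun j => (n : ℝ)⁻¹ * ∑ i, (gcnRep d W P X l * W l) i j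

/-! Write `W'_j = W_j + ΔW_j` and `e_j = ‖H'_j - H_j‖_F`. Since `σ` is 1-Lipschitz and
`P H'_j W'_j - P H_j W_j = P (H'_j - H_j) W'_j + P H_j ΔW_j`, mixing the bound
`‖A B‖_F ≤ ‖A‖₂ ‖B‖_F` with the triangle inequality gives
`e_{j+1} ≤ ‖P‖₂ (e_j ‖W'_j‖₂ + ‖H_j‖_F ‖ΔW_j‖₂)`. Inserting `‖W'_j‖₂ ≤ (1 + 1/l) ‖W_j‖₂` and the
a priori bound `‖H_j‖_F ≤ ‖X‖_F ‖P‖₂^j ∏_{i<j} ‖W_i‖₂`, the recursion unrolls to the geometric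
sum. -/

open scoped Matrix.Norms.L2Operator

section FrobeniusNorm

variable {m n p : Type*} [Fintype m] [Fintype n] [Fintype p]

lemma specNorm_eq_norm [DecidableEq n] (A : Matrix m n ℝ) : specNorm A = ‖A‖ := rfl

lemma frobNorm_nonneg (A : Matrix m n ℝ) : 0 ≤ frobNorm A := Real.sqrt_nonneg _

lemma frobNorm_eq_norm (A : Matrix m n ℝ) :
    frobNorm A = ‖(WithLp.toLp 2 fun q : m × n => A q.1 q.2 : EuclideanSpace ℝ (m × n))‖ := by
  simp [frobNorm, EuclideanSpace.norm_eq, Fintype.sum_prod_type]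

lemma frobNorm_add_le (A B : Matrix m n ℝ) : frobNorm (A + B) ≤ frobNorm A + frobNorm B := by
  simp only [frobNorm_eq_norm]
  exact norm_add_le (WithLp.toLp 2 fun q : m × n => A q.1 q.2 : EuclideanSpace ℝ (m × n))
    (WithLp.toLp 2 fun q : m × n => B q.1 q.2)

lemma frobNorm_transpose (A : Matrix m n ℝ) : frobNorm Aᵀ = frobNorm A := by
  rw [frobNorm, frobNorm, Finset.sum_comm]
  rfl

lemma sq_frobNorm_eq_sum_col (B : Matrix m n ℝ) :
    frobNorm B ^ 2 = ∑ j, ‖(WithLp.toLp 2 fun i => B i j : EuclideanSpace ℝ m)‖ ^ 2 := by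
  rw [frobNorm, Real.sq_sqrt (by positivity), Finset.sum_comm]
  simp [EuclideanSpace.real_norm_sq_eq]

lemma frobNorm_mul_le_left [DecidableEq n] (A : Matrix m n ℝ) (B : Matrix n p ℝ) :
    frobNorm (A * B) ≤ ‖A‖ * frobNorm B := by
  have hcol (j : p) : ‖(WithLp.toLp 2 fun i => (A * B) i j : EuclideanSpace ℝ m)‖ ≤
      ‖A‖ * ‖(WithLp.toLp 2 fun i => B i j : EuclideanSpace ℝ n)‖ :=
    A.l2_opNorm_mulVec (WithLp.toLp 2 fun i => B i j)
  refine (pow_le_pow_iff_left₀ (frobNorm_nonneg _)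
    (mul_nonneg (norm_nonneg _) (frobNorm_nonneg _)) two_ne_zero).mp ?_
  rw [mul_pow, sq_frobNorm_eq_sum_col, sq_frobNorm_eq_sum_col, Finset.mul_sum]
  gcongr with j
  rw [← mul_pow]
  exact pow_le_pow_left₀ (norm_nonneg _) (hcol j) 2

lemma frobNorm_mul_le_right [DecidableEq p] (A : Matrix m n ℝ) (B : Matrix n p ℝ) :
    frobNorm (A * B) ≤ frobNorm A * ‖B‖ := by
  classical
  calc frobNorm (A * B) = frobNorm (Bᵀ * Aᵀ) := by rw [← transpose_mul, frobNorm_transpose]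
    _ ≤ ‖Bᵀ‖ * frobNorm Aᵀ := frobNorm_mul_le_left _ _
    _ = frobNorm A * ‖B‖ := by
      rw [← conjTranspose_eq_transpose_of_trivial, l2_opNorm_conjTranspose, frobNorm_transpose,
        mul_comm]

lemma frobNorm_mul_mul_le {r : Type*} [Fintype r] [DecidableEq n] [DecidableEq r]
    (A : Matrix m n ℝ) (B : Matrix n p ℝ) (C : Matrix p r ℝ) :
    frobNorm (A * B * C) ≤ ‖A‖ * frobNorm B * ‖C‖ :=
  (frobNorm_mul_le_right _ _).trans <|
    mul_le_mul_of_nonneg_right (frobNorm_mul_le_left _ _) (norm_nonneg _)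

lemma frobNorm_map_sub_map_le {f : ℝ → ℝ} (hf : LipschitzWith 1 f) (A B : Matrix m n ℝ) :
    frobNorm (A.map f - B.map f) ≤ frobNorm (A - B) := by
  refine Real.sqrt_le_sqrt (sum_le_sum fun i _ => sum_le_sum fun j _ => sq_le_sq.mpr ?_)
  simpa [Real.dist_eq] using hf.dist_le_mul (A i j) (B i j)

lemma frobNorm_map_le {f : ℝ → ℝ} (hf : LipschitzWith 1 f) (hf0 : f 0 = 0) (A : Matrix m n ℝ) :
    frobNorm (A.map f) ≤ frobNorm A := by
  simpa [hf0] using frobNorm_map_sub_map_le hf A 0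

lemma frobNorm_relu_sub_le (A B : Matrix m n ℝ) : frobNorm (relu A - relu B) ≤ frobNorm (A - B) :=
  frobNorm_map_sub_map_le (LipschitzWith.id.max_const 0) A B

lemma frobNorm_relu_le (A : Matrix m n ℝ) : frobNorm (relu A) ≤ frobNorm A :=
  frobNorm_map_le (LipschitzWith.id.max_const 0) (max_self (0 : ℝ)) A

end FrobeniusNorm

lemma frobNorm_relu_mul_mul_sub_le {m n p r : Type*} [Fintype m] [Fintype n] [Fintype p]
    [Fintype r] [DecidableEq n] [DecidableEq r] (P : Matrix m n ℝ) (H H' : Matrix n p ℝ)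
    (W W' : Matrix p r ℝ) :
    frobNorm (relu (P * H' * W') - relu (P * H * W)) ≤
      ‖P‖ * (frobNorm (H' - H) * ‖W'‖ + frobNorm H * ‖W' - W‖) :=
  calc frobNorm (relu (P * H' * W') - relu (P * H * W))
      ≤ frobNorm (P * H' * W' - P * H * W) := frobNorm_relu_sub_le _ _
    _ = frobNorm (P * (H' - H) * W' + P * H * (W' - W)) := by
      simp only [Matrix.mul_sub, Matrix.sub_mul]
      abel_nf
    _ ≤ ‖P‖ * frobNorm (H' - H) * ‖W'‖ + ‖P‖ * frobNorm H * ‖W' - W‖ :=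
      (frobNorm_add_le _ _).trans <|
        add_le_add (frobNorm_mul_mul_le _ _ _) (frobNorm_mul_mul_le _ _ _)
    _ = ‖P‖ * (frobNorm (H' - H) * ‖W'‖ + frobNorm H * ‖W' - W‖) := by ring

lemma sum_range_succ_mul_pow_sub {R : Type*} [CommSemiring R] (a : ℕ → R) (q : R) (j : ℕ) :
    ∑ k ∈ range (j + 1), a k * q ^ (j - k) = q * ∑ k ∈ range j, a k * q ^ (j - 1 - k) + a j := by
  rw [sum_range_succ, Nat.sub_self, pow_zero, mul_one, mul_sum]
  congr 1
  refine sum_congr rfl fun k hk => ?_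
  rw [show j - k = j - 1 - k + 1 by have := mem_range.mp hk; omega, pow_succ]
  ring

section GCN

variable {n : ℕ} (d : ℕ → ℕ) (W ΔW : ∀ k : ℕ, Matrix (Fin (d k)) (Fin (d (k + 1))) ℝ)
  (P : Matrix (Fin n) (Fin n) ℝ) (X : Matrix (Fin n) (Fin (d 0)) ℝ)

lemma frobNorm_gcnRep_le (k : ℕ) :
    frobNorm (gcnRep d W P X k) ≤ frobNorm X * ‖P‖ ^ k * ∏ i ∈ range k, ‖W i‖ := by
  induction k with
  | zero => simp [gcnRep]
  | succ k ih =>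
    calc frobNorm (gcnRep d W P X (k + 1)) ≤ ‖P‖ * frobNorm (gcnRep d W P X k) * ‖W k‖ :=
          (frobNorm_relu_le _).trans (frobNorm_mul_mul_le _ _ _)
      _ ≤ ‖P‖ * (frobNorm X * ‖P‖ ^ k * ∏ i ∈ range k, ‖W i‖) * ‖W k‖ := by gcongr
      _ = frobNorm X * ‖P‖ ^ (k + 1) * ∏ i ∈ range (k + 1), ‖W i‖ := by
        rw [prod_range_succ, pow_succ]; ring

lemma frobNorm_gcnRep_add_sub_le (c : ℝ) (j : ℕ) (hΔ : ∀ k < j, ‖ΔW k‖ ≤ c * ‖W k‖) :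
    frobNorm (gcnRep d (fun k => W k + ΔW k) P X j - gcnRep d W P X j) ≤
      frobNorm X * ‖P‖ ^ j * (∏ i ∈ range j, ‖W i‖) *
        ∑ k ∈ range j, ‖ΔW k‖ / ‖W k‖ * (1 + c) ^ (j - 1 - k) := by
  induction j with
  | zero => simp [gcnRep, frobNorm]
  | succ j ih =>
    set H := gcnRep d W P X j
    set H' := gcnRep d (fun k => W k + ΔW k) P X j
    set S := ∑ k ∈ range j, ‖ΔW k‖ / ‖W k‖ * (1 + c) ^ (j - 1 - k)
    set A := frobNorm X * ‖P‖ ^ j * ∏ i ∈ range j, ‖W i‖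
    have hΔj : ‖ΔW j‖ ≤ c * ‖W j‖ := hΔ j (lt_add_one j)
    have hWj : ‖W j + ΔW j‖ ≤ ‖W j‖ * (1 + c) := by linarith [norm_add_le (W j) (ΔW j)]
    have hE : frobNorm (H' - H) ≤ A * S := ih fun k hk => hΔ k (hk.trans (lt_add_one j))
    -- a vanishing `W j` forces `ΔW j = 0`, so the junk value `0 / 0 = 0` is harmless
    have hcancel : ‖W j‖ * (‖ΔW j‖ / ‖W j‖) = ‖ΔW j‖ := by
      rcases eq_or_ne ‖W j‖ 0 with h | h
      · have hΔ0 : ‖ΔW j‖ = 0 := le_antisymm (by simpa [h] using hΔj) (norm_nonneg _)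
        simp [h, hΔ0]
      · exact mul_div_cancel₀ _ h
    calc frobNorm (relu (P * H' * (W j + ΔW j)) - relu (P * H * W j))
        ≤ ‖P‖ * (frobNorm (H' - H) * ‖W j + ΔW j‖ + frobNorm H * ‖ΔW j‖) := by
          simpa only [add_sub_cancel_left] using
            frobNorm_relu_mul_mul_sub_le P H H' (W j) (W j + ΔW j)
      _ ≤ ‖P‖ * (A * S * (‖W j‖ * (1 + c)) + A * ‖ΔW j‖) := by
          gcongr ‖P‖ * (?_ + ?_)
          · exact mul_le_mul hE hWj (norm_nonneg _) ((frobNorm_nonneg _).trans hE)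
          · exact mul_le_mul_of_nonneg_right (frobNorm_gcnRep_le d W P X j) (norm_nonneg _)
      _ = frobNorm X * ‖P‖ ^ (j + 1) * (∏ i ∈ range (j + 1), ‖W i‖) *
            ∑ k ∈ range (j + 1), ‖ΔW k‖ / ‖W k‖ * (1 + c) ^ (j + 1 - 1 - k) := by
          rw [Nat.add_sub_cancel, sum_range_succ_mul_pow_sub, prod_range_succ, pow_succ]
          linear_combination (-(‖P‖ * A)) * hcancel

end GCN

theorem gcnRep_pert_frobNorm_le_general (n l : ℕ) (d : ℕ → ℕ)
    (W ΔW : ∀ k : ℕ, Matrix (Fin (d k)) (Fin (d (k + 1))) ℝ)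
    (hΔ : ∀ k, k < l → specNorm (ΔW k) ≤ specNorm (W k) / l)
    (P : Matrix (Fin n) (Fin n) ℝ) (X : Matrix (Fin n) (Fin (d 0)) ℝ)
    (j : ℕ) (hjl : j ≤ l - 1) :
    frobNorm (gcnRep d (fun k => W k + ΔW k) P X j - gcnRep d W P X j) ≤
      frobNorm X * specNorm P ^ j * (∏ i ∈ Finset.range j, specNorm (W i)) *
        ∑ k ∈ Finset.range j,
          specNorm (ΔW k) / specNorm (W k) * (1 + 1 / (l : ℝ)) ^ (j - 1 - k) := by
  simp only [specNorm_eq_norm] at hΔ ⊢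
  refine frobNorm_gcnRep_add_sub_le d W ΔW P X (1 / l) j fun k hk => ?_
  rw [one_div_mul_eq_div]
  exact hΔ k (by omega)

/-- Bound on the change of the node representations of an `l`-layer GCN (with an arbitrary
matrix `P` in place of the graph Laplacian) under a perturbation `ΔW` of the weights with
`‖ΔW_i‖₂ ≤ ‖W_i‖₂/l`: for `1 ≤ j ≤ l-1`,
`‖H_j' - H_j‖_F ≤ ‖X‖_F ‖P‖₂^j (∏_{i=1}^j ‖W_i‖₂) Σ_{k=1}^j (‖ΔW_k‖₂/‖W_k‖₂)(1+1/l)^{j-k}`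
(weights are indexed from `0`, so `W k` is the paper's `W_{k+1}`). -/
theorem gcnRep_pert_frobNorm_le (n l : ℕ) (hl : 2 ≤ l) (d : ℕ → ℕ)
    (W ΔW : ∀ k : ℕ, Matrix (Fin (d k)) (Fin (d (k + 1))) ℝ)
    (hW : ∀ k, k < l → W k ≠ 0)
    (hΔ : ∀ k, k < l → specNorm (ΔW k) ≤ specNorm (W k) / l)
    (P : Matrix (Fin n) (Fin n) ℝ) (X : Matrix (Fin n) (Fin (d 0)) ℝ)
    (j : ℕ) (hj1 : 1 ≤ j) (hjl : j ≤ l - 1) :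
    frobNorm (gcnRep d (fun k => W k + ΔW k) P X j - gcnRep d W P X j) ≤
      frobNorm X * specNorm P ^ j * (∏ i ∈ Finset.range j, specNorm (W i)) *
        ∑ k ∈ Finset.range j,
          specNorm (ΔW k) / specNorm (W k) * (1 + 1 / (l : ℝ)) ^ (j - 1 - k) :=
  gcnRep_pert_frobNorm_le_general n l d W ΔW hΔ P X j hjl

end
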